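/- arXiv:1212.5951 — 3 statements merged into one kernel-verified Lean document; each statement's English description precedes it below -/
import Mathlib

section
/- Let X ⊆ A^{Σ*} be a sofic tree shift and let τ : X → X be a cellular automaton. If τ is injective then τ is surjective. -/
/-! Common definitions: configurations over the regular rooted tree `Σ*`
(words = `List Sg`), the shift action, tree shifts, blocks, shifts of finite
type, cellular automata, sofic tree shifts, unrestricted Rabin automata. -/

/-- The shift action: `f^w (w') = f (w ++ w')`. -/
def shiftMap {Sg A : Type} (f : List Sg → A) (w : List Sg) : List Sg → A :=
  fun w' => f (w ++ w')

/-- The orbit `{f^w : w ∈ Σ*}` of a configuration under the shift action. -/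
def shiftOrbit {Sg A : Type} (f : List Sg → A) : Set (List Sg → A) :=
  Set.range (shiftMap f)

/-- A configuration is regular if its orbit under the shift action is finite. -/
def IsRegularConfig {Sg A : Type} (f : List Sg → A) : Prop :=
  (shiftOrbit f).Finite

/-- A tree shift: a subset of `A^{Σ*}` that is closed in the prodiscrete
topology and invariant under the shift action. -/
def IsTreeShift {Sg A : Type} [TopologicalSpace A] (X : Set (List Sg → A)) : Prop :=
  IsClosed X ∧ ∀ f ∈ X, ∀ w : List Sg, shiftMap f w ∈ X

/-- A block of size `n + 1`: a map `Δ_{n+1} → A`, where `Δ_k` is the set of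
words of length `< k` (so blocks have size `≥ 1`). -/
def TreeBlock (Sg A : Type) : Type :=
  (n : ℕ) × ({w : List Sg // w.length < n + 1} → A)

/-- The restriction of `f^w` to `Δ_{n+1}`, viewed as a block. -/
def blockAt {Sg A : Type} (f : List Sg → A) (w : List Sg) (n : ℕ) : TreeBlock Sg A :=
  ⟨n, fun m => f (w ++ m.val)⟩

/-- `X(F)`: the set of configurations avoiding every block in `F`. -/
def avoids {Sg A : Type} (F : Set (TreeBlock Sg A)) : Set (List Sg → A) :=
  {f | ∀ (w : List Sg) (n : ℕ), blockAt f w n ∉ F}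

/-- A tree shift of finite type: `X = X(F)` for some finite set `F` of blocks. -/
def IsSFT {Sg A : Type} (X : Set (List Sg → A)) : Prop :=
  ∃ F : Set (TreeBlock Sg A), F.Finite ∧ X = avoids F

/-- A cellular automaton `τ : X → B^{Σ*}`: there are a finite memory set
`M ⊆ Σ*` and a local map `μ : A^M → B` with `τ(f)(w) = μ((f^w)|_M)`. -/
def IsCellularAutomaton {Sg A B : Type} (X : Set (List Sg → A))
    (τ : X → List Sg → B) : Prop :=
  ∃ (M : Finset (List Sg)) (μ : ({m : List Sg // m ∈ M} → A) → B),
    ∀ (f : X) (w : List Sg), τ f w = μ (fun m => f.val (w ++ m.val))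

/-- A sofic tree shift: the image of a tree shift of finite type under a
cellular automaton. -/
def IsSofic {Sg A : Type} (X : Set (List Sg → A)) : Prop :=
  ∃ (C : Type) (_ : Finite C) (Y : Set (List Sg → C)) (τ : Y → List Sg → A),
    IsSFT Y ∧ IsCellularAutomaton Y τ ∧ X = Set.range τ

/-- An unrestricted Rabin automaton: a nonempty finite state set `S` and a set
of transition bundles `𝒯 ⊆ S × A × S^Σ`. -/
structure URA (Sg A : Type) where
  S : Type
  [finS : Finite S]
  [neS : Nonempty S]
  T : Set (S × A × (Sg → S))

attribute [instance] URA.finS URA.neS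

/-- Acceptance of a configuration by an unrestricted Rabin automaton. -/
def URA.Accepts {Sg A : Type} (𝒜 : URA Sg A) (f : List Sg → A) : Prop :=
  ∃ α : List Sg → 𝒜.S,
    ∀ w : List Sg, (α w, f w, fun σ => α (w ++ [σ])) ∈ 𝒜.T

/-- `Sh_𝒜`: the set of configurations accepted by `𝒜`. -/
def URA.shift {Sg A : Type} (𝒜 : URA Sg A) : Set (List Sg → A) :=
  {f | 𝒜.Accepts f}

/-- `𝒜` is essential if every state is the source of some transition bundle. -/
def URA.Essential {Sg A : Type} (𝒜 : URA Sg A) : Prop :=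
  ∀ s : 𝒜.S, ∃ t ∈ 𝒜.T, t.1 = s

/-- `𝒜` is co-deterministic if for every terminal sequence and label there is
at most one transition bundle with that terminal sequence and label. -/
def URA.CoDeterministic {Sg A : Type} (𝒜 : URA Sg A) : Prop :=
  ∀ t ∈ 𝒜.T, ∀ t' ∈ 𝒜.T, t.2.1 = t'.2.1 → t.2.2 = t'.2.2 → t = t'

/-- `𝒜` is co-complete if for every terminal sequence and label there is at
least one transition bundle with that terminal sequence and label. -/
def URA.CoComplete {Sg A : Type} (𝒜 : URA Sg A) : Prop :=
  ∀ (s : Sg → 𝒜.S) (a : A), ∃ t ∈ 𝒜.T, t.2.1 = a ∧ t.2.2 = s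

/-- One step along a bundle path: some transition bundle has source `s` and
`σ`-terminal state `s'` for some `σ`. -/
def URA.Step {Sg A : Type} (𝒜 : URA Sg A) (s s' : 𝒜.S) : Prop :=
  ∃ t ∈ 𝒜.T, t.1 = s ∧ ∃ σ : Sg, t.2.2 σ = s'

/-- `𝒜` is strongly connected if any state can be joined to any other by a
bundle path (possibly empty). -/
def URA.StronglyConnected {Sg A : Type} (𝒜 : URA Sg A) : Prop :=
  ∀ s s' : 𝒜.S, Relation.ReflTransGen 𝒜.Step s s'

/-- A tree shift `X` is irreducible if for all blocks `p ∈ X_n`, `q ∈ X_m`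
there is `f ∈ X` with `f|_{Δ_n} = p` and, for every `w ∈ Σ^n`, some `v` with
`f|_{w v Δ_m} = w v · q`. -/
def IsIrreducibleShift {Sg A : Type} (X : Set (List Sg → A)) : Prop :=
  ∀ (n m : ℕ) (p q : List Sg → A),
    (∃ fp ∈ X, ∀ u : List Sg, u.length < n → fp u = p u) →
    (∃ fq ∈ X, ∀ u : List Sg, u.length < m → fq u = q u) →
    ∃ f ∈ X, (∀ u : List Sg, u.length < n → f u = p u) ∧
      ∀ w : List Sg, w.length = n → ∃ v : List Sg,
        ∀ u : List Sg, u.length < m → f (w ++ v ++ u) = q u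

/-- A subtree of `Σ*`: contains the root `ε` and is prefix-closed. -/
def IsSubtree {Sg : Type} (T : Set (List Sg)) : Prop :=
  ([] : List Sg) ∈ T ∧ ∀ u v : List Sg, u ++ v ∈ T → u ∈ T

/-- A full subtree: each vertex has either all of its children or none. -/
def IsFullSubtree {Sg : Type} (T : Set (List Sg)) : Prop :=
  IsSubtree T ∧ ∀ w ∈ T, (∀ σ : Sg, w ++ [σ] ∈ T) ∨ (∀ σ : Sg, w ++ [σ] ∉ T)

/-- `T⁺ = T ∪ {wσ : w ∈ T, σ ∈ Σ}`. -/
def treePlus {Sg : Type} (T : Set (List Sg)) : Set (List Sg) :=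
  T ∪ {x | ∃ w ∈ T, ∃ σ : Sg, x = w ++ [σ]}

/-- Acceptance of the full-tree-pattern `p : T → A` by the finite-tree
automaton `𝒜(I, F)` (initial states `I`, final state `F`). -/
def FTAccepts {Sg A : Type} (𝒜 : URA Sg A) (I : Set 𝒜.S) (F : 𝒜.S)
    (T : Set (List Sg)) (p : List Sg → A) : Prop :=
  ∃ α : List Sg → 𝒜.S,
    (∀ w ∈ T, (α w, p w, fun σ => α (w ++ [σ])) ∈ 𝒜.T) ∧
    α [] ∈ I ∧
    ∀ w ∈ treePlus T, w ∉ T → α w = F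

/-- A Rabin automaton: an unrestricted Rabin automaton together with a set of
initial states and a family of accepting sets. -/
structure RabinAutomaton (Sg A : Type) where
  toURA : URA Sg A
  I : Set toURA.S
  Acc : Set (Set toURA.S)

/-- Acceptance by a Rabin automaton: a homomorphism realizing `f`, starting at
an initial state, and such that along every right-infinite word, the set of
states visited infinitely often belongs to the family of accepting sets. -/
def RabinAccepts {Sg A : Type} (𝒜 : RabinAutomaton Sg A) (f : List Sg → A) : Prop :=
  ∃ α : List Sg → 𝒜.toURA.S,
    (∀ w : List Sg, (α w, f w, fun σ => α (w ++ [σ])) ∈ 𝒜.toURA.T) ∧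
    α [] ∈ 𝒜.I ∧
    ∀ ω : ℕ → Sg,
      {s : 𝒜.toURA.S | ∀ N : ℕ, ∃ n ≥ N, α ((List.range n).map ω) = s} ∈ 𝒜.Acc


/-! Regular configurations (those with a finite shift orbit) are dense in every sofic tree shift:
in a shift of finite type, replacing each vertex, level by level, by one of finitely many
representatives carrying the same block of depth `k` keeps every block of size `≤ k` allowed and
makes the orbit finite, and cellular automata are continuous and preserve regularity. An
injective cellular automaton maps the finite set of regular configurations of `X` with orbit size
at most `N` injectively into itself, hence onto itself. Thus the image of `τ`, compact and
therefore closed, contains a dense subset of `X`, hence all of `X`. -/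

def foldlConfig {Sg A Q : Type} (δ : Q → Sg → Q) (out : Q → A) (q : Q) : List Sg → A :=
  fun w => out (w.foldl δ q)

section RegularConfigurations

variable {Sg A : Type}

theorem shiftMap_shiftMap (f : List Sg → A) (w u : List Sg) :
    shiftMap (shiftMap f w) u = shiftMap f (w ++ u) := by
  funext w'
  simp [shiftMap, List.append_assoc]

theorem shiftMap_foldlConfig {Q : Type} (δ : Q → Sg → Q) (out : Q → A) (q : Q) (w : List Sg) :
    shiftMap (foldlConfig δ out q) w = foldlConfig δ out (w.foldl δ q) := by
  funext w'
  simp [shiftMap, foldlConfig, List.foldl_append]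

theorem isRegularConfig_foldlConfig {Q : Type} {δ : Q → Sg → Q} (out : Q → A) {S : Set Q}
    (hS : S.Finite) (hδ : ∀ q σ, δ q σ ∈ S) {q : Q} (hq : q ∈ S) :
    IsRegularConfig (foldlConfig δ out q) := by
  have hfoldl : ∀ (w : List Sg) (q : Q), q ∈ S → w.foldl δ q ∈ S := by
    intro w
    induction w with
    | nil => exact fun q hq => hq
    | cons σ w ih => exact fun q _ => ih (δ q σ) (hδ q σ)
  refine (hS.image (foldlConfig δ out)).subset ?_
  rintro _ ⟨w, rfl⟩
  exact ⟨_, hfoldl w q hq, (shiftMap_foldlConfig δ out q w).symm⟩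

theorem eq_foldlConfig_of_shiftMap {Q : Type} (e : Q → List Sg → A) (δ : Q → Sg → Q)
    (he : ∀ q σ, e (δ q σ) = shiftMap (e q) [σ]) (q : Q) :
    e q = foldlConfig δ (fun q => e q []) q := by
  have hrun : ∀ (w : List Sg) (q : Q), e (w.foldl δ q) = shiftMap (e q) w := by
    intro w
    induction w with
    | nil => exact fun q => rfl
    | cons σ w ih =>
      intro q
      rw [List.foldl_cons, ih, he, shiftMap_shiftMap, List.singleton_append]
  funext w
  simp [foldlConfig, hrun, shiftMap]

theorem IsRegularConfig.exists_eq_foldlConfig {f : List Sg → A} (hf : IsRegularConfig f) :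
    ∃ (δ : Fin (shiftOrbit f).ncard → Sg → Fin (shiftOrbit f).ncard)
      (out : Fin (shiftOrbit f).ncard → A) (q : Fin (shiftOrbit f).ncard),
      f = foldlConfig δ out q := by
  have : Finite (shiftOrbit f) := hf.to_subtype
  let eqv := (Finite.equivFin (shiftOrbit f)).trans (finCongr (Nat.card_coe_set_eq _))
  let e : Fin (shiftOrbit f).ncard → List Sg → A := fun i => (eqv.symm i).val
  have hstep : ∀ i σ, shiftMap (e i) [σ] ∈ shiftOrbit f := by
    intro i σ
    obtain ⟨w, hw⟩ := (eqv.symm i).2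
    exact ⟨w ++ [σ], by simp only [e, ← hw, shiftMap_shiftMap]⟩
  let δ i σ := eqv ⟨shiftMap (e i) [σ], hstep i σ⟩
  have he : ∀ i σ, e (δ i σ) = shiftMap (e i) [σ] := by simp [e, δ]
  refine ⟨δ, fun i => e i [], eqv ⟨f, [], rfl⟩, ?_⟩
  rw [← eq_foldlConfig_of_shiftMap e δ he]
  simp [e]

theorem finite_setOf_ncard_shiftOrbit_le [Finite Sg] [Finite A] (N : ℕ) :
    {f : List Sg → A | IsRegularConfig f ∧ (shiftOrbit f).ncard ≤ N}.Finite := by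
  refine ((Set.finite_le_nat N).biUnion fun n _ => Set.finite_range
    fun t : (Fin n → Sg → Fin n) × (Fin n → A) × Fin n => foldlConfig t.1 t.2.1 t.2.2).subset ?_
  rintro f ⟨hf, hN⟩
  obtain ⟨δ, out, q, hq⟩ := hf.exists_eq_foldlConfig
  exact Set.mem_biUnion hN ⟨(δ, out, q), hq.symm⟩

end RegularConfigurations

section LocalRules

variable {Sg A B : Type}

def globalMap {M : Finset (List Sg)} (μ : ({m : List Sg // m ∈ M} → A) → B)
    (f : List Sg → A) : List Sg → B :=
  fun w => μ (fun m => f (w ++ m.val))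

variable {M : Finset (List Sg)} (μ : ({m : List Sg // m ∈ M} → A) → B)

theorem shiftMap_globalMap (f : List Sg → A) (w : List Sg) :
    shiftMap (globalMap μ f) w = globalMap μ (shiftMap f w) := by
  funext w'
  simp [shiftMap, globalMap, List.append_assoc]

theorem shiftOrbit_globalMap (f : List Sg → A) :
    shiftOrbit (globalMap μ f) = globalMap μ '' shiftOrbit f := by
  simp only [shiftOrbit, ← Set.range_comp]
  exact congrArg Set.range (funext (shiftMap_globalMap μ f))

theorem IsRegularConfig.globalMap {f : List Sg → A} (hf : IsRegularConfig f) :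
    IsRegularConfig (globalMap μ f) := by
  rw [IsRegularConfig, shiftOrbit_globalMap]
  exact hf.image _

theorem ncard_shiftOrbit_globalMap_le {f : List Sg → A} (hf : IsRegularConfig f) :
    (shiftOrbit (globalMap μ f)).ncard ≤ (shiftOrbit f).ncard := by
  rw [shiftOrbit_globalMap]
  exact Set.ncard_image_le hf

theorem continuous_globalMap [TopologicalSpace A] [DiscreteTopology A] [TopologicalSpace B] :
    Continuous (globalMap μ) :=
  continuous_pi fun w => continuous_of_discreteTopology.comp
    (continuous_pi fun m => continuous_apply (w ++ m.val))

end LocalRules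

theorem IsCellularAutomaton.exists_eq_globalMap {Sg A B : Type} {X : Set (List Sg → A)}
    {τ : X → List Sg → B} (hτ : IsCellularAutomaton X τ) :
    ∃ (M : Finset (List Sg)) (μ : ({m : List Sg // m ∈ M} → A) → B),
      ∀ f : X, τ f = globalMap μ f.val := by
  obtain ⟨M, μ, hμ⟩ := hτ
  exact ⟨M, μ, fun f => funext (hμ f)⟩

theorem IsCellularAutomaton.continuous {Sg A B : Type} [TopologicalSpace A] [DiscreteTopology A]
    [TopologicalSpace B] {X : Set (List Sg → A)} {τ : X → List Sg → B}
    (hτ : IsCellularAutomaton X τ) : Continuous τ := by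
  obtain ⟨M, μ, hμ⟩ := hτ.exists_eq_globalMap
  rw [show τ = fun f : X => globalMap μ f.val from funext hμ]
  exact (continuous_globalMap μ).comp continuous_subtype_val

theorem IsCellularAutomaton.mem_range_of_isRegularConfig {Sg A : Type} [Finite Sg] [Finite A]
    {X : Set (List Sg → A)} {τ : X → List Sg → A} (hτ : IsCellularAutomaton X τ)
    (him : ∀ f : X, τ f ∈ X) (hinj : Function.Injective τ) {q : List Sg → A} (hq : q ∈ X)
    (hqr : IsRegularConfig q) : q ∈ Set.range τ := by
  obtain ⟨M, μ, hμ⟩ := hτ.exists_eq_globalMap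
  set R := X ∩ {f | IsRegularConfig f ∧ (shiftOrbit f).ncard ≤ (shiftOrbit q).ncard}
  have hmaps : Set.MapsTo (globalMap μ) R R := fun f ⟨hfX, hfr, hfN⟩ =>
    ⟨hμ ⟨f, hfX⟩ ▸ him ⟨f, hfX⟩, hfr.globalMap μ,
      (ncard_shiftOrbit_globalMap_le μ hfr).trans hfN⟩
  have hinjOn : Set.InjOn (globalMap μ) R := fun f hf f' hf' heq =>
    congrArg Subtype.val (@hinj ⟨f, hf.1⟩ ⟨f', hf'.1⟩ (by rw [hμ, hμ]; exact heq))
  obtain ⟨f, hf, rfl⟩ :=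
    (((finite_setOf_ncard_shiftOrbit_le _).inter_of_right X).injOn_iff_bijOn_of_mapsTo
      hmaps).mp hinjOn |>.surjOn ⟨hq, hqr, le_rfl⟩
  exact ⟨⟨f, hf.1⟩, hμ _⟩

section Topology

variable {Sg A : Type} [TopologicalSpace A]

theorem mem_closure_of_forall_exists_agree {S : Set (List Sg → A)} {g : List Sg → A}
    (h : ∀ n : ℕ, ∃ f ∈ S, ∀ w : List Sg, w.length ≤ n → f w = g w) : g ∈ closure S := by
  choose f hfS hfg using h
  refine mem_closure_of_tendsto (b := Filter.atTop) (tendsto_pi_nhds.2 fun w => ?_)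
    (Filter.Eventually.of_forall hfS)
  exact tendsto_const_nhds.congr'
    (Filter.eventually_atTop.2 ⟨w.length, fun n hn => (hfg n w hn).symm⟩)

theorem isClosed_avoids [Finite Sg] [DiscreteTopology A] (F : Set (TreeBlock Sg A)) :
    IsClosed (avoids F) := by
  simp only [avoids, Set.ofPred_forall]
  refine isClosed_iInter fun w => isClosed_iInter fun n => ?_
  have : Finite {u : List Sg // u.length < n + 1} := (List.finite_length_lt Sg (n + 1)).to_subtype
  exact (isClosed_discrete {p | (⟨n, p⟩ : TreeBlock Sg A) ∉ F}).preimage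
    (continuous_pi fun m => continuous_apply (w ++ m.val))

end Topology

section RegularDensity

variable {Sg A : Type}

theorem exists_finite_range_apply_append_eq [Finite Sg] [Finite A] (g : List Sg → A) (k : ℕ) :
    ∃ ρ : List Sg → List Sg, (Set.range ρ).Finite ∧
      ∀ v m : List Sg, m.length ≤ k → g (ρ v ++ m) = g (v ++ m) := by
  have : Finite {m : List Sg // m.length ≤ k} := (List.finite_length_le Sg k).to_subtype
  let block : List Sg → {m : List Sg // m.length ≤ k} → A := fun v m => g (v ++ m.val)
  refine ⟨Function.invFun block ∘ block,
    (Set.finite_range _).subset (Set.range_comp_subset_range _ _),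
    fun v m hm => congrFun (Function.invFun_eq (f := block) ⟨v, rfl⟩) ⟨m, hm⟩⟩

theorem apply_foldl_append_eq {g : List Sg → A} {ρ : List Sg → List Sg} {k : ℕ}
    (hρ : ∀ v m : List Sg, m.length ≤ k → g (ρ v ++ m) = g (v ++ m)) (u m v : List Sg)
    (hk : u.length + m.length ≤ k) :
    g (u.foldl (fun v σ => ρ (v ++ [σ])) v ++ m) = g (v ++ u ++ m) := by
  induction u generalizing v with
  | nil => simp
  | cons σ u ih =>
    simp only [List.length_cons] at hk
    rw [List.foldl_cons, ih _ (by omega), List.append_assoc, hρ _ _ (by simp; omega)]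
    simp

theorem exists_isRegularConfig_agree_of_mem_avoids [Finite Sg] [Finite A]
    {F : Set (TreeBlock Sg A)} {k : ℕ} (hk : ∀ b ∈ F, b.1 ≤ k) {g : List Sg → A}
    (hg : g ∈ avoids F) :
    ∃ h ∈ avoids F, IsRegularConfig h ∧ ∀ u : List Sg, u.length ≤ k → h u = g u := by
  obtain ⟨ρ, hρfin, hρ⟩ := exists_finite_range_apply_append_eq g k
  let δ : List Sg → Sg → List Sg := fun v σ => ρ (v ++ [σ])
  have hblock : ∀ w m : List Sg, m.length ≤ k →
      foldlConfig δ g (ρ []) (w ++ m) = g (w.foldl δ (ρ []) ++ m) := by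
    intro w m hm
    simpa [foldlConfig, List.foldl_append] using
      apply_foldl_append_eq hρ m [] (w.foldl δ (ρ [])) (by simpa)
  refine ⟨foldlConfig δ g (ρ []), fun w n hn => ?_,
    isRegularConfig_foldlConfig g hρfin (fun _ _ => ⟨_, rfl⟩) ⟨[], rfl⟩, fun u hu => ?_⟩
  · have : blockAt (foldlConfig δ g (ρ [])) w n = blockAt g (w.foldl δ (ρ [])) n := by
      unfold blockAt
      congr 1
      funext m
      exact hblock w m.val (by have := m.2; have : n ≤ k := hk _ hn; omega)
    exact hg _ n (this ▸ hn)
  · simpa using (hblock [] u hu).trans (hρ [] u hu)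

theorem avoids_subset_closure_regular [Finite Sg] [Finite A] [TopologicalSpace A]
    {F : Set (TreeBlock Sg A)} (hF : F.Finite) :
    avoids F ⊆ closure (avoids F ∩ {f | IsRegularConfig f}) := by
  obtain ⟨K, hK⟩ := (hF.image Sigma.fst).bddAbove
  intro g hg
  refine mem_closure_of_forall_exists_agree fun n => ?_
  obtain ⟨h, hF', hreg, hagree⟩ := exists_isRegularConfig_agree_of_mem_avoids
    (k := n ⊔ K) (fun b hb => le_sup_of_le_right (hK ⟨b, hb, rfl⟩)) hg
  exact ⟨h, ⟨hF', hreg⟩, fun w hw => hagree w (le_sup_of_le_left hw)⟩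

end RegularDensity

namespace IsSofic

variable {Sg A : Type} [Finite Sg] [TopologicalSpace A] {X : Set (List Sg → A)}

theorem isCompact (hX : IsSofic X) : IsCompact X := by
  obtain ⟨C, _, Y, τ, ⟨F, -, rfl⟩, hτ, rfl⟩ := hX
  let _ : TopologicalSpace C := ⊥
  have : DiscreteTopology C := ⟨rfl⟩
  have : CompactSpace (avoids F) := isCompact_iff_compactSpace.mp (isClosed_avoids F).isCompact
  exact isCompact_range hτ.continuous

theorem subset_closure_regular [Finite A] (hX : IsSofic X) :
    X ⊆ closure (X ∩ {f | IsRegularConfig f}) := by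
  obtain ⟨C, _, Y, τ, ⟨F, hF, rfl⟩, hτ, rfl⟩ := hX
  let _ : TopologicalSpace C := ⊥
  have : DiscreteTopology C := ⟨rfl⟩
  obtain ⟨M, μ, hμ⟩ := hτ.exists_eq_globalMap
  rintro _ ⟨y, rfl⟩
  have hy : y ∈ closure (Subtype.val ⁻¹' {f | IsRegularConfig f}) := by
    rw [closure_subtype, Subtype.image_preimage_coe]
    exact avoids_subset_closure_regular hF y.2
  refine closure_mono ?_ (image_closure_subset_closure_image hτ.continuous ⟨y, hy, rfl⟩)
  rintro _ ⟨f, hf, rfl⟩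
  exact ⟨⟨f, rfl⟩, hμ f ▸ IsRegularConfig.globalMap μ hf⟩

end IsSofic

theorem sofic_surjunctive_general {Sg A : Type} [Finite Sg] [Finite A]
    (X : Set (List Sg → A)) (hX : IsSofic X)
    (τ : X → List Sg → A) (hτ : IsCellularAutomaton X τ)
    (him : ∀ f : X, τ f ∈ X) :
    Function.Injective τ → ∀ g ∈ X, ∃ f : X, τ f = g := by
  intro hinj g hg
  let _ : TopologicalSpace A := ⊥
  have : DiscreteTopology A := ⟨rfl⟩
  have : CompactSpace X := isCompact_iff_compactSpace.mp hX.isCompact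
  have hclosed : IsClosed (Set.range τ) := (isCompact_range hτ.continuous).isClosed
  have hregular : X ∩ {f | IsRegularConfig f} ⊆ Set.range τ := fun q ⟨hq, hqr⟩ =>
    hτ.mem_range_of_isRegularConfig him hinj hq hqr
  exact closure_minimal hregular hclosed (hX.subset_closure_regular hg)

/-- every injective cellular automaton `τ : X → X` on a sofic
tree shift is surjective. -/
theorem sofic_surjunctive {Sg A : Type} [Finite Sg] [Nonempty Sg] [Finite A]
    [TopologicalSpace A] [DiscreteTopology A]
    (X : Set (List Sg → A)) (hX : IsSofic X)
    (τ : X → List Sg → A) (hτ : IsCellularAutomaton X τ)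
    (him : ∀ f : X, τ f ∈ X) :
    Function.Injective τ → ∀ g ∈ X, ∃ f : X, τ f = g :=
  sofic_surjunctive_general X hX τ hτ him
end

section
/- Let X ⊆ A^{Σ*} be an irreducible sofic tree shift and let 𝒜 be a minimal co-deterministic presentation of X, i.e. a co-deterministic unrestricted Rabin automaton with Sh_𝒜 = X having fewest states among all co-deterministic unrestricted Rabin automata accepting X. Then 𝒜 is strongly connected. -/
/-! A configuration `g ∈ X` whose set `R` of root states is as small as possible has a
synchronizing block: any configuration of `X` carrying `g|Δ_N` at its root has root set
exactly `R`. By irreducibility, such blocks can be glued below any block of `X` and vice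
versa. Hence the states reachable from a point of `R` support runs on every configuration of
`X`, and so do the states from which `R` is reachable. Restrictions of a co-deterministic
automaton stay co-deterministic, so by minimality both sets of states are everything. -/

namespace URA

variable {Sg A : Type} (B : URA Sg A)

def IsRun (f : List Sg → A) (α : List Sg → B.S) : Prop :=
  ∀ w : List Sg, (α w, f w, fun σ => α (w ++ [σ])) ∈ B.T

def IsPartialRun (n : ℕ) (f : List Sg → A) (α : List Sg → B.S) : Prop :=
  ∀ w : List Sg, w.length < n → (α w, f w, fun σ => α (w ++ [σ])) ∈ B.T

def rootSet (f : List Sg → A) : Set B.S :=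
  {c | ∃ α, B.IsRun f α ∧ α [] = c}

def partialRoots (n : ℕ) (f : List Sg → A) : Set B.S :=
  {c | ∃ α, B.IsPartialRun n f α ∧ α [] = c}

def restrict (K : Set B.S) (hK : K.Nonempty) : URA Sg A where
  S := K
  neS := hK.to_subtype
  T := {t | (t.1.val, t.2.1, fun σ => (t.2.2 σ).val) ∈ B.T}

def IsMinimalCoDeterministic : Prop :=
  B.CoDeterministic ∧ ∀ B' : URA Sg A, B'.CoDeterministic → B'.shift = B.shift →
    Nat.card B.S ≤ Nat.card B'.S

def IsSynchronizing (g : List Sg → A) (N : ℕ) : Prop :=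
  B.partialRoots N g ⊆ B.rootSet g ∧
    ∀ h ∈ B.shift, (∀ u : List Sg, u.length < N → h u = g u) → B.rootSet g ⊆ B.rootSet h

variable {B}

theorem IsRun.isPartialRun {f : List Sg → A} {α : List Sg → B.S} (hα : B.IsRun f α) (n : ℕ) :
    B.IsPartialRun n f α :=
  fun w _ => hα w

theorem IsRun.reflTransGen {f : List Sg → A} {α : List Sg → B.S} (hα : B.IsRun f α)
    (u x : List Sg) : Relation.ReflTransGen B.Step (α u) (α (u ++ x)) := by
  induction x generalizing u with
  | nil => rw [List.append_nil]
  | cons σ x ih =>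
    rw [← List.singleton_append, ← List.append_assoc]
    exact .head ⟨_, hα u, rfl, σ, rfl⟩ (ih (u ++ [σ]))

theorem IsRun.mem_partialRoots {h f : List Sg → A} {γ : List Sg → B.S} (hγ : B.IsRun h γ)
    {p : List Sg} {m : ℕ} (hp : ∀ x : List Sg, x.length < m → h (p ++ x) = f x) :
    γ p ∈ B.partialRoots m f := by
  refine ⟨fun x => γ (p ++ x), fun x hx => ?_, by simp⟩
  simpa [← hp x hx, List.append_assoc] using hγ (p ++ x)

theorem partialRoots_congr {n : ℕ} {f f' : List Sg → A}
    (h : ∀ u : List Sg, u.length < n → f u = f' u) :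
    B.partialRoots n f = B.partialRoots n f' := by
  ext c
  refine exists_congr fun α => and_congr_left' (forall₂_congr fun w hw => ?_)
  rw [h w hw]

theorem partialRoots_anti (f : List Sg → A) : Antitone (B.partialRoots · f) :=
  fun _ _ hmn _ ⟨α, hα, hroot⟩ => ⟨α, fun w hw => hα w (hw.trans_le hmn), hroot⟩

theorem rootSet_subset_partialRoots (n : ℕ) (f : List Sg → A) :
    B.rootSet f ⊆ B.partialRoots n f :=
  fun _ ⟨α, hα, hroot⟩ => ⟨α, hα.isPartialRun n, hroot⟩

theorem rootSet_nonempty {f : List Sg → A} (hf : f ∈ B.shift) : (B.rootSet f).Nonempty :=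
  let ⟨α, hα⟩ := hf; ⟨α [], α, hα, rfl⟩

theorem CoDeterministic.restrict (hB : B.CoDeterministic) (K : Set B.S) (hK : K.Nonempty) :
    (B.restrict K hK).CoDeterministic := by
  rintro ⟨s, a, c⟩ ht ⟨s', a', c'⟩ ht' rfl rfl
  cases Subtype.ext (congrArg Prod.fst (hB _ ht _ ht' rfl rfl) : s.val = s'.val)
  rfl

theorem shift_restrict_subset (K : Set B.S) (hK : K.Nonempty) :
    (B.restrict K hK).shift ⊆ B.shift :=
  fun _ ⟨α, hα⟩ => ⟨fun w => (α w).val, hα⟩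

theorem mem_shift_restrict {K : Set B.S} (hK : K.Nonempty) {f : List Sg → A}
    {α : List Sg → B.S} (hα : B.IsRun f α) (hαK : ∀ w, α w ∈ K) :
    f ∈ (B.restrict K hK).shift :=
  ⟨fun w => ⟨α w, hαK w⟩, hα⟩

theorem IsMinimalCoDeterministic.eq_univ_of_shift_subset (hB : B.IsMinimalCoDeterministic)
    {K : Set B.S} (hK : K.Nonempty) (hsub : B.shift ⊆ (B.restrict K hK).shift) :
    K = Set.univ := by
  have hcard : Nat.card B.S ≤ K.ncard :=
    hB.2 _ (hB.1.restrict K hK) ((shift_restrict_subset K hK).antisymm hsub)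
  by_contra hK_ne
  exact (Set.ncard_lt_ncard (Set.ssubset_univ_iff.2 hK_ne)).not_ge (by simpa using hcard)

theorem exists_partialRun_reflTransGen_rootSet [Nonempty Sg] {g : List Sg → A} {N : ℕ}
    (hirr : IsIrreducibleShift B.shift) (hg : g ∈ B.shift) (hN : B.partialRoots N g ⊆ B.rootSet g) {f : List Sg → A}
    (hf : f ∈ B.shift) (n : ℕ) :
    ∃ α, B.IsPartialRun n f α ∧
      ∀ w : List Sg, w.length ≤ n → ∃ e ∈ B.rootSet g, Relation.ReflTransGen B.Step (α w) e := by
  obtain ⟨h, ⟨γ, (hγ : B.IsRun h γ)⟩, htop, hbelow⟩ :=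
    hirr n N f g ⟨f, hf, fun _ _ => rfl⟩ ⟨g, hg, fun _ _ => rfl⟩
  refine ⟨γ, fun w hw => htop w hw ▸ hγ w, fun w hw => ?_⟩
  obtain ⟨σ⟩ := ‹Nonempty Sg›
  obtain ⟨v, hv⟩ := hbelow (w ++ .replicate (n - w.length) σ) (by simp; omega)
  refine ⟨_, hN (hγ.mem_partialRoots hv), ?_⟩
  simpa using hγ.reflTransGen w (.replicate (n - w.length) σ ++ v)

variable [Finite Sg]

/-- König's lemma, as Cantor's intersection theorem in the compact space `B.S ^ Σ*`: each
constraint involves only finitely many coordinates. -/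
theorem exists_run_of_forall_partialRun {f : List Sg → A} (Q : List Sg → B.S → Prop)
    (h : ∀ n, ∃ α, B.IsPartialRun n f α ∧ ∀ w : List Sg, w.length ≤ n → Q w (α w)) :
    ∃ α, B.IsRun f α ∧ ∀ w, Q w (α w) := by
  let _ : TopologicalSpace B.S := ⊥
  have : DiscreteTopology B.S := ⟨rfl⟩
  let C : ℕ → Set (List Sg → B.S) := fun n => ⋂ w : List Sg,
    {α | (w.length < n → (α w, f w, fun σ => α (w ++ [σ])) ∈ B.T) ∧ (w.length ≤ n → Q w (α w))}
  have mem_C {n α} : α ∈ C n ↔ B.IsPartialRun n f α ∧ ∀ w, w.length ≤ n → Q w (α w) := by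
    simp only [C, Set.mem_iInter, Set.mem_ofPred_eq, IsPartialRun, forall_and]
  have C_closed n : IsClosed (C n) := isClosed_iInter fun w =>
    (isClosed_discrete _).preimage (X := List Sg → B.S) (Y := B.S × (Sg → B.S))
      (t := {p | (w.length < n → (p.1, f w, p.2) ∈ B.T) ∧ (w.length ≤ n → Q w p.1)})
      ((continuous_apply w).prodMk (continuous_pi fun σ => continuous_apply (w ++ [σ])))
  have C_succ n : C (n + 1) ⊆ C n := fun α hα => by
    rw [mem_C] at hα ⊢
    exact ⟨fun w hw => hα.1 w (by omega), fun w hw => hα.2 w (by omega)⟩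
  obtain ⟨α, hα⟩ := IsCompact.nonempty_iInter_of_sequence_nonempty_isCompact_isClosed C C_succ
    (fun n => (h n).imp fun _ => mem_C.2) (C_closed 0).isCompact C_closed
  have hαC n : α ∈ C n := Set.mem_iInter.1 hα n
  exact ⟨α, fun w => (mem_C.1 (hαC (w.length + 1))).1 w (by omega),
    fun w => (mem_C.1 (hαC w.length)).2 w le_rfl⟩

theorem exists_partialRoots_subset_rootSet (f : List Sg → A) :
    ∃ N, B.partialRoots N f ⊆ B.rootSet f := by
  obtain ⟨N, hN⟩ := WellFoundedLT.antitone_chain_condition (B.partialRoots_anti f)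
  refine ⟨N, fun c hc => ?_⟩
  have hc_all n : c ∈ B.partialRoots n f := by
    rcases le_total n N with h | h
    · exact B.partialRoots_anti f h hc
    · exact hN n h ▸ hc
  obtain ⟨α, hα, hroot⟩ := exists_run_of_forall_partialRun (fun w s => w = [] → s = c)
    fun n => let ⟨α, hα, hroot⟩ := hc_all n; ⟨α, hα, by rintro w - rfl; exact hroot⟩
  exact ⟨α, hα, hroot [] rfl⟩

theorem exists_isSynchronizing (hX : B.shift.Nonempty) :
    ∃ g ∈ B.shift, ∃ N, B.IsSynchronizing g N := by
  obtain ⟨g, hg, hg_min⟩ := (measure fun f => (B.rootSet f).ncard).wf.has_min B.shift hX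
  obtain ⟨N, hN⟩ := exists_partialRoots_subset_rootSet (B := B) g
  refine ⟨g, hg, N, hN, fun h hh hagree => ?_⟩
  have hsub : B.rootSet h ⊆ B.rootSet g :=
    (rootSet_subset_partialRoots N h).trans (partialRoots_congr hagree ▸ hN)
  exact (Set.eq_of_subset_of_ncard_le hsub (not_lt.1 (hg_min h hh)) (Set.toFinite _)).ge

variable [Nonempty Sg] {g : List Sg → A} {N : ℕ}

theorem IsSynchronizing.exists_mem_rootSet_reflTransGen (hirr : IsIrreducibleShift B.shift)
    (hg : g ∈ B.shift) (hs : B.IsSynchronizing g N) {f : List Sg → A} (hf : f ∈ B.shift)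
    {e : B.S} (he : e ∈ B.rootSet g) :
    ∃ d ∈ B.rootSet f, Relation.ReflTransGen B.Step e d := by
  obtain ⟨M, hM⟩ := exists_partialRoots_subset_rootSet (B := B) f
  obtain ⟨h, hh, htop, hbelow⟩ := hirr N M g f ⟨g, hg, fun _ _ => rfl⟩ ⟨f, hf, fun _ _ => rfl⟩
  obtain ⟨γ, hγ, rfl⟩ := hs.2 h hh htop he
  obtain ⟨σ⟩ := ‹Nonempty Sg›
  obtain ⟨v, hv⟩ := hbelow (List.replicate N σ) List.length_replicate
  exact ⟨_, hM (hγ.mem_partialRoots hv), by simpa using hγ.reflTransGen [] (.replicate N σ ++ v)⟩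

theorem IsMinimalCoDeterministic.reflTransGen_of_mem_rootSet (hB : B.IsMinimalCoDeterministic)
    (hirr : IsIrreducibleShift B.shift) (hg : g ∈ B.shift) (hs : B.IsSynchronizing g N)
    {e : B.S} (he : e ∈ B.rootSet g) (s : B.S) : Relation.ReflTransGen B.Step e s := by
  let K := {s | Relation.ReflTransGen B.Step e s}
  have hK : K.Nonempty := ⟨e, .refl⟩
  suffices B.shift ⊆ (B.restrict K hK).shift from
    Set.eq_univ_iff_forall.1 (hB.eq_univ_of_shift_subset hK this) s
  intro f hf
  obtain ⟨_, ⟨γ, hγ, rfl⟩, hed⟩ := hs.exists_mem_rootSet_reflTransGen hirr hg hf he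
  exact mem_shift_restrict hK hγ fun w => hed.trans (by simpa using hγ.reflTransGen [] w)

theorem IsMinimalCoDeterministic.exists_reflTransGen_mem_rootSet
    (hB : B.IsMinimalCoDeterministic) (hirr : IsIrreducibleShift B.shift) (hg : g ∈ B.shift)
    (hN : B.partialRoots N g ⊆ B.rootSet g) (s : B.S) :
    ∃ e ∈ B.rootSet g, Relation.ReflTransGen B.Step s e := by
  let K := {s | ∃ e ∈ B.rootSet g, Relation.ReflTransGen B.Step s e}
  have hK : K.Nonempty := let ⟨e, he⟩ := rootSet_nonempty hg; ⟨e, e, he, .refl⟩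
  suffices B.shift ⊆ (B.restrict K hK).shift from
    Set.eq_univ_iff_forall.1 (hB.eq_univ_of_shift_subset hK this) s
  intro f hf
  obtain ⟨α, hα, hαK⟩ := exists_run_of_forall_partialRun (fun _ s => s ∈ K)
    (exists_partialRun_reflTransGen_rootSet hirr hg hN hf)
  exact mem_shift_restrict hK hα hαK

end URA

theorem minimal_presentation_stronglyConnected_general {Sg A : Type} [Finite Sg]
    [Nonempty Sg] (𝒜 : URA Sg A) (hcd : 𝒜.CoDeterministic)
    (hirr : IsIrreducibleShift 𝒜.shift)
    (hmin : ∀ 𝒜' : URA Sg A, 𝒜'.CoDeterministic → 𝒜'.shift = 𝒜.shift →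
      Nat.card 𝒜.S ≤ Nat.card 𝒜'.S) :
    𝒜.StronglyConnected := by
  have hB : 𝒜.IsMinimalCoDeterministic := ⟨hcd, hmin⟩
  intro s s'
  rcases 𝒜.shift.eq_empty_or_nonempty with hX | hX
  · have hs := hB.eq_univ_of_shift_subset (Set.singleton_nonempty s) (by simp [hX])
    obtain rfl : s' = s := Set.eq_univ_iff_forall.1 hs s'
    exact .refl
  obtain ⟨g, hg, N, hs⟩ := URA.exists_isSynchronizing hX
  obtain ⟨e, he, hse⟩ := hB.exists_reflTransGen_mem_rootSet hirr hg hs.1 s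
  exact hse.trans (hB.reflTransGen_of_mem_rootSet hirr hg hs he s')

/-- a minimal co-deterministic presentation of an irreducible
sofic tree shift is strongly connected. -/
theorem minimal_presentation_stronglyConnected {Sg A : Type} [Finite Sg]
    [Nonempty Sg] [Finite A] (𝒜 : URA Sg A) (hcd : 𝒜.CoDeterministic)
    (hirr : IsIrreducibleShift 𝒜.shift)
    (hmin : ∀ 𝒜' : URA Sg A, 𝒜'.CoDeterministic → 𝒜'.shift = 𝒜.shift →
      Nat.card 𝒜.S ≤ Nat.card 𝒜'.S) :
    𝒜.StronglyConnected :=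
  minimal_presentation_stronglyConnected_general 𝒜 hcd hirr hmin
end

section
/- A tree shift X ⊆ A^{Σ*} is sofic if and only if it is recognized by a Rabin automaton (S, Σ, A, 𝒯, ℐ, 𝔉): the intersection of the class of Rabin-recognizable tree languages and the class of tree shifts is precisely the class of sofic tree shifts. -/
/-! An unrestricted Rabin automaton presents a sofic shift: its shift is the projection to labels
of the finite-type shift of locally consistent (state, label) configurations. Conversely, the image
of a shift of finite type under a cellular automaton is accepted by the automaton whose states are
the patterns on a ball containing every forbidden block and the memory set. Declaring every state
initial and every set accepting turns it into a Rabin automaton recognizing the sofic shift.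

Conversely, let a tree shift `X` be recognized by a Rabin automaton `𝒜`, and restrict `𝒜` to the
transition bundles occurring in accepting runs. A run built from such bundles is reproduced to any
finite depth by an accepting tree (a run with no condition at the root), obtained by putting the
trees for the children below a used bundle. Grafting that tree into an accepting run at a node
carrying the same state gives a configuration of `X` whose shift at that node agrees with the given
configuration on a ball. As `X` is closed and shift-invariant, it contains every configuration
accepted by the restricted automaton. -/

instance {Sg : Type} [Finite Sg] (n : ℕ) : Finite {w : List Sg // w.length < n} :=
  (List.finite_length_lt Sg n).to_subtype

theorem IsClosed.mem_of_forall_exists_agree {Sg A : Type} [TopologicalSpace A]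
    [DiscreteTopology A] {X : Set (List Sg → A)} (hX : IsClosed X) {f : List Sg → A}
    (h : ∀ n : ℕ, ∃ g ∈ X, ∀ u : List Sg, u.length < n → g u = f u) : f ∈ X := by
  by_contra hf
  obtain ⟨I, U, hU, hsub⟩ := isOpen_pi_iff.mp hX.isOpen_compl f hf
  obtain ⟨g, hgX, hg⟩ := h (I.sup List.length + 1)
  refine hsub (fun u hu => ?_) hgX
  rw [hg u (Nat.lt_succ_of_le (Finset.le_sup hu))]
  exact (hU u hu).2

theorem isSFT_setOf_forall_window {Sg C : Type} [Finite Sg] [Finite C] (n : ℕ)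
    (P : ({u : List Sg // u.length < n + 1} → C) → Prop) :
    IsSFT {g : List Sg → C | ∀ w, P fun u => g (w ++ u.val)} := by
  refine ⟨Sigma.mk n '' {p | ¬ P p}, (Set.toFinite _).image _, ?_⟩
  ext g
  constructor
  · rintro hg w m ⟨p, hp, he⟩
    obtain ⟨rfl, he⟩ := Sigma.mk.inj_iff.mp he
    exact hp ((eq_of_heq he).symm ▸ hg w)
  · intro hg w
    by_contra hw
    exact hg w n ⟨_, hw, rfl⟩

theorem URA.isSofic_shift {Sg A : Type} [Finite Sg] [Finite A] (𝒜 : URA Sg A) :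
    IsSofic 𝒜.shift := by
  let bundle (p : {u : List Sg // u.length < 1 + 1} → 𝒜.S × A) : 𝒜.S × A × (Sg → 𝒜.S) :=
    ((p ⟨[], by simp⟩).1, (p ⟨[], by simp⟩).2, fun σ => (p ⟨[σ], by simp⟩).1)
  refine ⟨𝒜.S × A, inferInstance, _, fun g w => (g.val w).2,
    isSFT_setOf_forall_window 1 fun p => bundle p ∈ 𝒜.T,
    ⟨{[]}, fun p => (p ⟨[], Finset.mem_singleton_self _⟩).2, fun g w => by simp⟩, ?_⟩
  ext f
  constructor
  · rintro ⟨α, hα⟩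
    exact ⟨⟨fun w => (α w, f w), fun w => by simpa [bundle] using hα w⟩, rfl⟩
  · rintro ⟨g, rfl⟩
    exact ⟨fun w => (g.val w).1, fun w => by simpa [bundle] using g.2 w⟩

section WindowAutomaton

variable {Sg A C : Type}

theorem window_eq_root_of_consistent {k : ℕ} (hk : 0 < k)
    {α : List Sg → {u : List Sg // u.length < k} → C}
    (hα : ∀ w σ u (hu : u.length + 1 < k), α (w ++ [σ]) ⟨u, by omega⟩ = α w ⟨σ :: u, hu⟩)
    (w u : List Sg) (hu : u.length < k) : α w ⟨u, hu⟩ = α (w ++ u) ⟨[], hk⟩ := by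
  induction u generalizing w with
  | nil => rw [List.append_nil]
  | cons σ u ih =>
    rw [← hα w σ u hu, ih, List.append_assoc, List.singleton_append]

/-- States are the patterns of `Δ_k`; a bundle is allowed when the children's patterns continue
the parent's, no forbidden block sits at the root, and the label is the local rule. -/
def windowURA [Finite Sg] [Finite C] [Nonempty C] (k : ℕ) (F : Set (TreeBlock Sg C))
    (M : Finset (List Sg)) (hM : ∀ m ∈ M, m.length < k) (μ : ({m // m ∈ M} → C) → A) :
    URA Sg A where
  S := {u : List Sg // u.length < k} → C
  T := {t | (∀ σ u (hu : u.length + 1 < k), t.2.2 σ ⟨u, by omega⟩ = t.1 ⟨σ :: u, hu⟩) ∧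
    (∀ n (hn : n < k), (⟨n, fun m => t.1 ⟨m.val, by omega⟩⟩ : TreeBlock Sg C) ∉ F) ∧
    t.2.1 = μ fun m => t.1 ⟨m.val, hM m.val m.2⟩}

theorem windowURA_shift [Finite Sg] [Finite C] [Nonempty C] {k : ℕ} (hk : 0 < k)
    {F : Set (TreeBlock Sg C)} (hF : ∀ b ∈ F, b.1 < k) {M : Finset (List Sg)}
    (hM : ∀ m ∈ M, m.length < k) (μ : ({m // m ∈ M} → C) → A) :
    (windowURA k F M hM μ).shift =
      {f | ∃ g ∈ avoids F, ∀ w, f w = μ fun m => g (w ++ m.val)} := by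
  ext f
  constructor
  · rintro ⟨α, hα⟩
    have hroot := window_eq_root_of_consistent hk fun w => (hα w).1
    refine ⟨fun w => α w ⟨[], hk⟩, fun w n hn => ?_, fun w => ?_⟩
    · have hnk : n < k := hF _ hn
      have hblock : blockAt (fun w => α w ⟨[], hk⟩) w n = ⟨n, fun m => α w ⟨m.val, by omega⟩⟩ :=
        Sigma.ext rfl (heq_of_eq (funext fun m => (hroot w m.val _).symm))
      exact (hα w).2.1 n hnk (hblock ▸ hn)
    · exact (hα w).2.2.trans (congrArg μ (funext fun m => hroot w m.val _))
  · rintro ⟨g, hg, hf⟩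
    obtain rfl : f = _ := funext hf
    refine ⟨fun w u => g (w ++ u.val), fun w => ⟨fun σ u hu => ?_, fun n _ => hg w n, rfl⟩⟩
    simp [List.append_assoc]

end WindowAutomaton

theorem exists_ura_shift_eq_of_isSofic {Sg A : Type} [Finite Sg] {X : Set (List Sg → A)}
    (h : IsSofic X) : ∃ 𝒜 : URA Sg A, X = 𝒜.shift := by
  obtain ⟨C, hC, Y, τ, ⟨F, hF, rfl⟩, ⟨M, μ, hμ⟩, rfl⟩ := h
  cases isEmpty_or_nonempty C
  · refine ⟨⟨Unit, ∅⟩, Set.eq_of_subset_of_subset ?_ ?_⟩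
    · rintro _ ⟨⟨g, -⟩, rfl⟩
      exact isEmptyElim (g [])
    · rintro f ⟨α, hα⟩
      exact (hα []).elim
  obtain ⟨N, hN⟩ := (hF.image Sigma.fst).bddAbove
  let k := max N (M.sup List.length) + 1
  have hFk : ∀ b ∈ F, b.1 < k := fun b hb => by
    have := hN ⟨b, hb, rfl⟩
    omega
  have hMk : ∀ m ∈ M, m.length < k := fun m hm => by
    have := Finset.le_sup (f := List.length) hm
    omega
  refine ⟨windowURA k F M hMk μ, ?_⟩
  rw [windowURA_shift (Nat.succ_pos _) hFk]
  ext f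
  constructor
  · rintro ⟨g, rfl⟩
    exact ⟨g.val, g.2, hμ g⟩
  · rintro ⟨g, hg, hf⟩
    exact ⟨⟨g, hg⟩, funext fun w => (hμ ⟨g, hg⟩ w).trans (hf w).symm⟩

def infOften {α : Type} (u : ℕ → α) : Set α :=
  {s | ∀ N : ℕ, ∃ n ≥ N, u n = s}

theorem infOften_eq_of_add_eq {α : Type} {u v : ℕ → α} {a b : ℕ}
    (h : ∀ k, u (a + k) = v (b + k)) : infOften u = infOften v := by
  suffices H : ∀ {u v : ℕ → α} {a b : ℕ}, (∀ k, u (a + k) = v (b + k)) →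
      infOften u ⊆ infOften v from
    (H h).antisymm (H fun k => (h k).symm)
  intro u v a b h s hs N
  obtain ⟨n, hn, rfl⟩ := hs (a + N)
  refine ⟨b + (n - a), by omega, ?_⟩
  rw [← h, Nat.add_sub_cancel' (by omega)]

theorem Stream'.take_eq_map_range {α : Type} (ω : ℕ → α) (n : ℕ) :
    Stream'.take n ω = (List.range n).map ω := by
  induction n with
  | zero => rfl
  | succ n ih => rw [Stream'.take_succ' (s := ω), ih, List.range_succ, List.map_append]; rfl

theorem Stream'.take_length_eq_of_prefix_take {α : Type} {ω : Stream' α} {w : List α} {n : ℕ}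
    (h : w <+: ω.take n) : ω.take w.length = w := by
  have hn : w.length ≤ n := by simpa using h.length_le
  calc ω.take w.length = (ω.take n).take w.length := by rw [Stream'.take_take, min_eq_right hn]
    _ = w := (List.prefix_iff_eq_take.mp h).symm

noncomputable def graftAt {Sg γ : Type} (w : List Sg) (base g : List Sg → γ) (v : List Sg) : γ :=
  open scoped Classical in if w <+: v then g (v.drop w.length) else base v

section Graft

variable {Sg γ : Type} {w v : List Sg} {base g : List Sg → γ}

theorem graftAt_append (u : List Sg) : graftAt w base g (w ++ u) = g u := by
  simp [graftAt]

theorem graftAt_of_not_prefix (h : ¬ w <+: v) : graftAt w base g v = base v := by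
  simp [graftAt, h]

theorem graftAt_eq_base (hg : g [] = base w) (hv : w <+: v → v = w) :
    graftAt w base g v = base v := by
  by_cases hp : w <+: v
  · obtain rfl := hv hp
    simpa using (graftAt_append (base := base) (g := g) (w := v) []).trans hg
  · exact graftAt_of_not_prefix hp

end Graft

def consTree {Sg γ : Type} (a : γ) (g : Sg → List Sg → γ) : List Sg → γ
  | [] => a
  | σ :: u => g σ u

namespace RabinAutomaton

variable {Sg A : Type} (𝒜 : RabinAutomaton Sg A)

def IsAcceptingTree (f : List Sg → A) (α : List Sg → 𝒜.toURA.S) : Prop :=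
  (∀ w, (α w, f w, fun σ => α (w ++ [σ])) ∈ 𝒜.toURA.T) ∧
    ∀ ω : Stream' Sg, infOften (fun n => α (ω.take n)) ∈ 𝒜.Acc

variable {𝒜}

theorem rabinAccepts_iff {f : List Sg → A} :
    RabinAccepts 𝒜 f ↔ ∃ α, 𝒜.IsAcceptingTree f α ∧ α [] ∈ 𝒜.I := by
  simp only [RabinAccepts, IsAcceptingTree, infOften, ← Stream'.take_eq_map_range]
  exact exists_congr fun α => by tauto

theorem IsAcceptingTree.shift {f : List Sg → A} {α : List Sg → 𝒜.toURA.S}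
    (h : 𝒜.IsAcceptingTree f α) (w : List Sg) :
    𝒜.IsAcceptingTree (shiftMap f w) (shiftMap α w) := by
  refine ⟨fun v => by simpa [shiftMap, List.append_assoc] using h.1 (w ++ v), fun ω => ?_⟩
  rw [infOften_eq_of_add_eq (a := 0) (b := w.length) (v := fun n => α ((w ++ₛ ω).take n))
    fun k => by rw [zero_add, shiftMap, Stream'.append_take]]
  exact h.2 (w ++ₛ ω)

theorem IsAcceptingTree.cons {s : 𝒜.toURA.S} {a : A} {f : Sg → List Sg → A}
    {α : Sg → List Sg → 𝒜.toURA.S} (hroot : (s, a, fun σ => α σ []) ∈ 𝒜.toURA.T)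
    (h : ∀ σ, 𝒜.IsAcceptingTree (f σ) (α σ)) :
    𝒜.IsAcceptingTree (consTree a f) (consTree s α) := by
  refine ⟨fun v => ?_, fun ω => ?_⟩
  · cases v with
    | nil => exact hroot
    | cons σ u => exact (h σ).1 u
  · rw [infOften_eq_of_add_eq (a := 1) (b := 0) fun k => by
      rw [Nat.add_comm, Stream'.take_succ, zero_add]]
    exact (h (ω 0)).2 ω.tail

theorem IsAcceptingTree.graft {f g : List Sg → A} {α β : List Sg → 𝒜.toURA.S} {w : List Sg}
    (hα : 𝒜.IsAcceptingTree f α) (hβ : 𝒜.IsAcceptingTree g β) (hroot : β [] = α w) :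
    𝒜.IsAcceptingTree (graftAt w f g) (graftAt w α β) := by
  refine ⟨fun v => ?_, fun ω => ?_⟩
  · by_cases hv : w <+: v
    · obtain ⟨u, rfl⟩ := hv
      simpa only [List.append_assoc, graftAt_append] using hβ.1 u
    · have hchild (σ : Sg) : graftAt w α β (v ++ [σ]) = α (v ++ [σ]) :=
        graftAt_eq_base hroot fun h => ((List.prefix_concat_iff.mp h).resolve_right hv).symm
      simpa only [graftAt_of_not_prefix hv, hchild] using hα.1 v
  · by_cases hω : ω.take w.length = w
    · rw [infOften_eq_of_add_eq (a := w.length) (b := 0) fun k => by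
        rw [Stream'.take_add, hω, graftAt_append, zero_add]]
      exact hβ.2 _
    · have hoff (n : ℕ) : graftAt w α β (ω.take n) = α (ω.take n) :=
        graftAt_of_not_prefix fun h => hω (Stream'.take_length_eq_of_prefix_take h)
      simpa only [hoff] using hα.2 ω

variable (𝒜)

def usedBundles : Set (𝒜.toURA.S × A × (Sg → 𝒜.toURA.S)) :=
  {t | ∃ f α, 𝒜.IsAcceptingTree f α ∧ α [] ∈ 𝒜.I ∧
    ∃ w, t = (α w, f w, fun σ => α (w ++ [σ]))}

def usedURA : URA Sg A :=
  ⟨𝒜.toURA.S, 𝒜.usedBundles⟩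

variable {𝒜}

theorem usedBundles_subset : 𝒜.usedBundles ⊆ 𝒜.toURA.T := by
  rintro _ ⟨f, α, h, -, w, rfl⟩
  exact h.1 w

theorem exists_isAcceptingTree_agree (n : ℕ) {f : List Sg → A} {α : List Sg → 𝒜.toURA.S}
    (hf : ∀ w, (α w, f w, fun σ => α (w ++ [σ])) ∈ 𝒜.usedBundles) :
    ∃ g β, 𝒜.IsAcceptingTree g β ∧ β [] = α [] ∧ ∀ u : List Sg, u.length < n → g u = f u := by
  induction n generalizing f α with
  | zero =>
    obtain ⟨g, β, hacc, -, w, ht⟩ := hf []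
    simp only [Prod.mk.injEq] at ht
    exact ⟨shiftMap g w, shiftMap β w, hacc.shift w, by simp [shiftMap, ht.1], by simp⟩
  | succ n ih =>
    have hchild (σ : Sg) := @ih (shiftMap f [σ]) (shiftMap α [σ]) fun w => by
      simpa [shiftMap, List.append_assoc] using hf ([σ] ++ w)
    choose g β hacc hroot hagree using hchild
    refine ⟨consTree (f []) g, consTree (α []) β, .cons ?_ hacc, rfl, fun u hu => ?_⟩
    · simpa [hroot, shiftMap] using usedBundles_subset (hf [])
    · cases u with
      | nil => rfl
      | cons σ u => exact hagree σ u (by simpa using hu)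

theorem exists_rabinAccepts_shiftMap_agree {f : List Sg → A} (hf : f ∈ 𝒜.usedURA.shift)
    (n : ℕ) : ∃ g w, RabinAccepts 𝒜 g ∧ ∀ u : List Sg, u.length < n → shiftMap g w u = f u := by
  obtain ⟨α, hα⟩ := hf
  obtain ⟨g, β, hacc, hroot, hagree⟩ := exists_isAcceptingTree_agree n hα
  obtain ⟨g₀, β₀, hacc₀, hI₀, w, ht⟩ := hα []
  have hroot' : β [] = β₀ w := hroot.trans (congrArg Prod.fst ht)
  refine ⟨graftAt w g₀ g, w, rabinAccepts_iff.mpr ⟨_, hacc₀.graft hacc hroot', ?_⟩, ?_⟩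
  · rwa [graftAt_eq_base hroot' fun h => (List.prefix_nil.mp h).symm]
  · simpa [shiftMap, graftAt_append] using hagree

theorem eq_usedURA_shift_of_isTreeShift [TopologicalSpace A] [DiscreteTopology A]
    (hX : IsTreeShift {f | RabinAccepts 𝒜 f}) : {f | RabinAccepts 𝒜 f} = 𝒜.usedURA.shift := by
  refine Set.eq_of_subset_of_subset (fun f hf => ?_) fun f hf => ?_
  · obtain ⟨α, hacc, hI⟩ := rabinAccepts_iff.mp hf
    exact ⟨α, fun w => ⟨f, α, hacc, hI, w, rfl⟩⟩
  · refine hX.1.mem_of_forall_exists_agree fun n => ?_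
    obtain ⟨g, w, hg, hagree⟩ := exists_rabinAccepts_shiftMap_agree hf n
    exact ⟨shiftMap g w, hX.2 g hg w, hagree⟩

end RabinAutomaton

def URA.toRabinAutomaton {Sg A : Type} (𝒜 : URA Sg A) : RabinAutomaton Sg A :=
  ⟨𝒜, Set.univ, Set.univ⟩

theorem URA.setOf_rabinAccepts_toRabinAutomaton {Sg A : Type} (𝒜 : URA Sg A) :
    {f | RabinAccepts 𝒜.toRabinAutomaton f} = 𝒜.shift := by
  ext f
  exact ⟨fun ⟨α, h, _⟩ => ⟨α, h⟩, fun ⟨α, h⟩ => ⟨α, h, trivial, fun _ => trivial⟩⟩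

theorem sofic_iff_rabin_recognizable_general {Sg A : Type} [Finite Sg]
    [Finite A] [TopologicalSpace A] [DiscreteTopology A]
    (X : Set (List Sg → A)) (hX : IsTreeShift X) :
    IsSofic X ↔ ∃ 𝒜 : RabinAutomaton Sg A, X = {f | RabinAccepts 𝒜 f} := by
  constructor
  · intro hs
    obtain ⟨𝒜, rfl⟩ := exists_ura_shift_eq_of_isSofic hs
    exact ⟨𝒜.toRabinAutomaton, 𝒜.setOf_rabinAccepts_toRabinAutomaton.symm⟩
  · rintro ⟨𝒜, rfl⟩
    rw [𝒜.eq_usedURA_shift_of_isTreeShift hX]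
    exact 𝒜.usedURA.isSofic_shift

/-- a tree shift is sofic iff it is recognized by a Rabin
automaton. -/
theorem sofic_iff_rabin_recognizable {Sg A : Type} [Finite Sg] [Nonempty Sg]
    [Finite A] [TopologicalSpace A] [DiscreteTopology A]
    (X : Set (List Sg → A)) (hX : IsTreeShift X) :
    IsSofic X ↔ ∃ 𝒜 : RabinAutomaton Sg A, X = {f | RabinAccepts 𝒜 f} :=
  sofic_iff_rabin_recognizable_general X hX
end
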